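/- If b₁ and b₂ both satisfy lim_{n→∞} (1/n)·d_p(x_n, b_i Λ_n) = 0 for the same sequence x_n in GL_d(ℚ_p), then lim_{n→∞} (1/n)·d_p(e, Λ_n⁻¹ b₁⁻¹ b₂ Λ_n) = 0, hence b₁⁻¹b₂ ∈ P_p and b₁, b₂ define the same element of the flag manifold B_p = GL_d(ℚ_p)/P_p. -/

import Mathlib

open Matrix
noncomputable def lnplus (x : ℝ) : ℝ := max (Real.log x) 0

noncomputable def opNormP (p : ℕ) [Fact p.Prime] {n : Type*} [Fintype n] [DecidableEq n]
    (g : Matrix n n ℚ_[p]) : ℝ :=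
  ‖LinearMap.toContinuousLinearMap g.mulVecLin‖

noncomputable def dP (p : ℕ) [Fact p.Prime] {d : ℕ}
    (g h : GL (Fin d) ℚ_[p]) : ℝ :=
  lnplus (opNormP p ((g⁻¹ * h : GL (Fin d) ℚ_[p]) : Matrix (Fin d) (Fin d) ℚ_[p]))
  + lnplus (opNormP p ((h⁻¹ * g : GL (Fin d) ℚ_[p]) : Matrix (Fin d) (Fin d) ℚ_[p]))

/-- The invertible diagonal matrix with entries `p^(f i)`. -/
noncomputable def diagGL (p : ℕ) [hp : Fact p.Prime] {d : ℕ} (f : Fin d → ℤ) :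
    GL (Fin d) ℚ_[p] :=
  ⟨Matrix.diagonal fun i => (p : ℚ_[p]) ^ f i,
   Matrix.diagonal fun i => (p : ℚ_[p]) ^ (-f i),
   by
     rw [Matrix.diagonal_mul_diagonal]
     have hne : (p : ℚ_[p]) ≠ 0 := Nat.cast_ne_zero.mpr hp.out.ne_zero
     simp [mul_inv_cancel₀ (zpow_ne_zero _ hne)],
   by
     rw [Matrix.diagonal_mul_diagonal]
     have hne : (p : ℚ_[p]) ≠ 0 := Nat.cast_ne_zero.mpr hp.out.ne_zero
     simp [inv_mul_cancel₀ (zpow_ne_zero _ hne)]⟩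

/-- `Λ_n`: the diagonal matrix with entries `p^{-⌊nλ_i/ln p⌋}`. -/
noncomputable def LamP (p : ℕ) [Fact p.Prime] {d : ℕ} (lam : Fin d → ℝ) (n : ℕ) :
    GL (Fin d) ℚ_[p] :=
  diagGL p fun i => -⌊(n * lam i) / Real.log p⌋

/-! The entry `(i, j)` of `Λ_n⁻¹ c Λ_n` is `c i j` times a power of `p` of norm about
`exp (n (λ_j - λ_i))`, and `d_p(e, g)` dominates the logarithm of every entry of `g`; so
`d_p(e, Λ_n⁻¹ c Λ_n) = o(n)` forces `c i j = 0` whenever `λ_i < λ_j`. For `c = b₁⁻¹ b₂` this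
distance is `d_p(b₁ Λ_n, b₂ Λ_n)` by left invariance, which is `o(n)` by the triangle inequality
through `x_n`. As `P_p` is a group, `b₁⁻¹ b₂ ∈ P_p` gives `b₁ P_p = b₂ P_p`. -/

open Filter Topology

namespace Matrix.GeneralLinearGroup

variable {ι R α : Type*} [Fintype ι] [DecidableEq ι] [CommRing R] [LinearOrder α]

def blockTriangularSubgroup (b : ι → α) : Subgroup (GL ι R) where
  carrier := {u | (u : Matrix ι ι R).BlockTriangular b}
  mul_mem' hu hv := hu.mul hv
  one_mem' := blockTriangular_one
  inv_mem' {u} hu := by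
    show ((u⁻¹ : GL ι R) : Matrix ι ι R).BlockTriangular b
    rw [coe_units_inv]
    exact blockTriangular_inv_of_blockTriangular hu

end Matrix.GeneralLinearGroup

open Matrix.GeneralLinearGroup

theorem lnplus_eq_posLog : lnplus = Real.posLog :=
  funext fun _ => max_comm _ _

section OpNorm

variable {p : ℕ} [Fact p.Prime] {d : ℕ}

theorem opNormP_mul_le (A B : Matrix (Fin d) (Fin d) ℚ_[p]) :
    opNormP p (A * B) ≤ opNormP p A * opNormP p B := by
  unfold opNormP
  rw [Matrix.mulVecLin_mul]
  exact ContinuousLinearMap.opNorm_comp_le (LinearMap.toContinuousLinearMap A.mulVecLin)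
    (LinearMap.toContinuousLinearMap B.mulVecLin)

theorem norm_apply_le_opNormP (M : Matrix (Fin d) (Fin d) ℚ_[p]) (i j : Fin d) :
    ‖M i j‖ ≤ opNormP p M := by
  have h := (LinearMap.toContinuousLinearMap M.mulVecLin).le_opNorm (Pi.single j 1)
  rw [Pi.norm_single, norm_one, mul_one] at h
  calc ‖M i j‖ = ‖(M *ᵥ Pi.single j 1) i‖ := by rw [mulVec_single_one, col_apply]
    _ ≤ ‖M *ᵥ Pi.single j 1‖ := norm_le_pi_norm _ i
    _ ≤ opNormP p M := h

theorem lnplus_opNormP_mul_le (A B : GL (Fin d) ℚ_[p]) :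
    lnplus (opNormP p ((A * B : GL (Fin d) ℚ_[p]) : Matrix (Fin d) (Fin d) ℚ_[p]))
      ≤ lnplus (opNormP p (A : Matrix (Fin d) (Fin d) ℚ_[p]))
        + lnplus (opNormP p (B : Matrix (Fin d) (Fin d) ℚ_[p])) := by
  rw [lnplus_eq_posLog, Units.val_mul]
  exact (Real.posLog_le_posLog (norm_nonneg _) (opNormP_mul_le _ _)).trans Real.posLog_mul

end OpNorm

section Pseudometric

variable {p : ℕ} [Fact p.Prime] {d : ℕ}

theorem dP_nonneg (g h : GL (Fin d) ℚ_[p]) : 0 ≤ dP p g h := by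
  rw [dP, lnplus_eq_posLog]
  exact add_nonneg Real.posLog_nonneg Real.posLog_nonneg

theorem dP_comm (g h : GL (Fin d) ℚ_[p]) : dP p g h = dP p h g :=
  add_comm _ _

theorem dP_triangle (g k h : GL (Fin d) ℚ_[p]) : dP p g h ≤ dP p g k + dP p k h := by
  have e₁ : g⁻¹ * h = (g⁻¹ * k) * (k⁻¹ * h) := by group
  have e₂ : h⁻¹ * g = (h⁻¹ * k) * (k⁻¹ * g) := by group
  unfold dP
  rw [e₁, e₂]
  linarith [lnplus_opNormP_mul_le (g⁻¹ * k) (k⁻¹ * h), lnplus_opNormP_mul_le (h⁻¹ * k) (k⁻¹ * g)]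

theorem dP_one_inv_mul (g h : GL (Fin d) ℚ_[p]) : dP p 1 (g⁻¹ * h) = dP p g h := by
  simp only [dP, inv_one, one_mul, mul_one, _root_.mul_inv_rev, inv_inv]

theorem log_norm_apply_le_dP_one (M : GL (Fin d) ℚ_[p]) (i j : Fin d) :
    Real.log ‖(M : Matrix (Fin d) (Fin d) ℚ_[p]) i j‖ ≤ dP p 1 M := by
  rw [dP, inv_one, one_mul, lnplus_eq_posLog]
  calc Real.log ‖(M : Matrix (Fin d) (Fin d) ℚ_[p]) i j‖
      ≤ Real.posLog ‖(M : Matrix (Fin d) (Fin d) ℚ_[p]) i j‖ := le_max_right _ _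
    _ ≤ Real.posLog (opNormP p (M : Matrix (Fin d) (Fin d) ℚ_[p])) :=
        Real.posLog_le_posLog (norm_nonneg _) (norm_apply_le_opNormP _ i j)
    _ ≤ _ := le_add_of_nonneg_right Real.posLog_nonneg

theorem tendsto_dP_div_of_tendsto {x y₁ y₂ : ℕ → GL (Fin d) ℚ_[p]}
    (h₁ : Tendsto (fun n : ℕ => (1 / (n : ℝ)) * dP p (x n) (y₁ n)) atTop (𝓝 0))
    (h₂ : Tendsto (fun n : ℕ => (1 / (n : ℝ)) * dP p (x n) (y₂ n)) atTop (𝓝 0)) :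
    Tendsto (fun n : ℕ => (1 / (n : ℝ)) * dP p (y₁ n) (y₂ n)) atTop (𝓝 0) := by
  refine squeeze_zero (fun n => mul_nonneg (by positivity) (dP_nonneg _ _)) (fun n => ?_)
    (by simpa only [add_zero] using h₁.add h₂)
  rw [← mul_add, dP_comm (x n)]
  exact mul_le_mul_of_nonneg_left (dP_triangle _ _ _) (by positivity)

end Pseudometric

section Conjugation

variable {p : ℕ} [hp : Fact p.Prime] {d : ℕ}

theorem conj_diagGL_apply (f : Fin d → ℤ) (c : GL (Fin d) ℚ_[p]) (i j : Fin d) :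
    (((diagGL p f)⁻¹ * c * diagGL p f : GL (Fin d) ℚ_[p]) : Matrix (Fin d) (Fin d) ℚ_[p]) i j
      = (p : ℚ_[p]) ^ (-f i) * (c : Matrix (Fin d) (Fin d) ℚ_[p]) i j * (p : ℚ_[p]) ^ f j := by
  change (diagonal (fun i => (p : ℚ_[p]) ^ (-f i)) * (c : Matrix (Fin d) (Fin d) ℚ_[p])
    * diagonal fun i => (p : ℚ_[p]) ^ f i) i j = _
  rw [mul_diagonal, diagonal_mul]

theorem log_norm_conj_diagGL_apply (f : Fin d → ℤ) (c : GL (Fin d) ℚ_[p]) {i j : Fin d}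
    (hc : (c : Matrix (Fin d) (Fin d) ℚ_[p]) i j ≠ 0) :
    Real.log ‖(((diagGL p f)⁻¹ * c * diagGL p f : GL (Fin d) ℚ_[p]) :
        Matrix (Fin d) (Fin d) ℚ_[p]) i j‖
      = Real.log ‖(c : Matrix (Fin d) (Fin d) ℚ_[p]) i j‖ + (f i - f j) * Real.log p := by
  have hp0 : (0 : ℝ) < p := by exact_mod_cast hp.out.pos
  rw [conj_diagGL_apply, norm_mul, norm_mul, Padic.norm_p_zpow, Padic.norm_p_zpow, neg_neg,
    Real.log_mul (by positivity) (by positivity), Real.log_mul (by positivity) (by positivity),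
    Real.log_zpow, Real.log_zpow]
  push_cast
  ring

end Conjugation

theorem sub_sub_le_floor_div_sub_floor_div_mul (a b : ℝ) {L : ℝ} (hL : 0 < L) :
    a - b - L ≤ ((⌊a / L⌋ : ℝ) - ⌊b / L⌋) * L := by
  have ha := Int.sub_one_lt_floor (a / L)
  have hb := Int.floor_le (b / L)
  calc a - b - L = (a / L - 1 - b / L) * L := by field_simp; ring
    _ ≤ _ := mul_le_mul_of_nonneg_right (by linarith) hL.le

theorem nonpos_of_tendsto_div_of_linear_le {f : ℕ → ℝ} {a b : ℝ}
    (hf : Tendsto (fun n : ℕ => (1 / (n : ℝ)) * f n) atTop (𝓝 0))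
    (h : ∀ n : ℕ, a * n + b ≤ f n) : a ≤ 0 := by
  have hlin : Tendsto (fun n : ℕ => a + b / n) atTop (𝓝 a) := by
    simpa using tendsto_const_nhds.add (tendsto_const_div_atTop_nhds_zero_nat b)
  refine le_of_tendsto_of_tendsto hlin hf ?_
  filter_upwards [eventually_ne_atTop 0] with n hn
  calc a + b / n = (1 / (n : ℝ)) * (a * n + b) := by field_simp
    _ ≤ (1 / (n : ℝ)) * f n := mul_le_mul_of_nonneg_left (h n) (by positivity)

section Parabolic

variable {p : ℕ} [hp : Fact p.Prime] {d : ℕ}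

theorem linear_le_dP_one_conj_LamP (lam : Fin d → ℝ) (c : GL (Fin d) ℚ_[p]) {i j : Fin d}
    (hc : (c : Matrix (Fin d) (Fin d) ℚ_[p]) i j ≠ 0) (n : ℕ) :
    (lam j - lam i) * n + (Real.log ‖(c : Matrix (Fin d) (Fin d) ℚ_[p]) i j‖ - Real.log p)
      ≤ dP p 1 ((LamP p lam n)⁻¹ * c * LamP p lam n) := by
  have hL : 0 < Real.log p := Real.log_pos (by exact_mod_cast hp.out.one_lt)
  have hfloor := sub_sub_le_floor_div_sub_floor_div_mul (n * lam j) (n * lam i) hL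
  calc _ ≤ Real.log ‖(c : Matrix (Fin d) (Fin d) ℚ_[p]) i j‖
          + ((-⌊n * lam i / Real.log p⌋ : ℤ) - (-⌊n * lam j / Real.log p⌋ : ℤ) : ℝ)
            * Real.log p := by
        push_cast
        linarith
    _ = _ := (log_norm_conj_diagGL_apply (fun i => -⌊n * lam i / Real.log p⌋) c hc).symm
    _ ≤ _ := log_norm_apply_le_dP_one _ i j

/-- `P_p` is `blockTriangularSubgroup (toDual ∘ lam)`, since `BlockTriangular M b` asks for
`M i j = 0` whenever `b j < b i`. -/
theorem mem_blockTriangularSubgroup_of_tendsto (lam : Fin d → ℝ) (c : GL (Fin d) ℚ_[p])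
    (hc : Tendsto (fun n : ℕ => (1 / (n : ℝ)) * dP p 1 ((LamP p lam n)⁻¹ * c * LamP p lam n))
      atTop (𝓝 0)) :
    c ∈ blockTriangularSubgroup (OrderDual.toDual ∘ lam) := by
  intro i j (hij : lam i < lam j)
  by_contra hne
  exact (sub_pos.2 hij).not_ge
    (nonpos_of_tendsto_div_of_linear_le hc (linear_le_dP_one_conj_LamP lam c hne))

end Parabolic

open Filter in
theorem same_flag_of_tendsto_general (p : ℕ) [Fact p.Prime] (d : ℕ)
    (lam : Fin d → ℝ)
    (b₁ b₂ : GL (Fin d) ℚ_[p]) (x : ℕ → GL (Fin d) ℚ_[p])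
    (h₁ : Tendsto (fun n : ℕ => (1 / (n : ℝ)) * dP p (x n) (b₁ * LamP p lam n))
      atTop (nhds 0))
    (h₂ : Tendsto (fun n : ℕ => (1 / (n : ℝ)) * dP p (x n) (b₂ * LamP p lam n))
      atTop (nhds 0)) :
    Tendsto (fun n : ℕ => (1 / (n : ℝ)) *
        dP p 1 ((LamP p lam n)⁻¹ * b₁⁻¹ * b₂ * LamP p lam n)) atTop (nhds 0)
    ∧ (∀ i j : Fin d, lam i < lam j →
        ((b₁⁻¹ * b₂ : GL (Fin d) ℚ_[p]) : Matrix (Fin d) (Fin d) ℚ_[p]) i j = 0)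
    ∧ (fun u => b₁ * u) ''
        {u : GL (Fin d) ℚ_[p] | ∀ i j : Fin d, lam i < lam j →
          (u : Matrix (Fin d) (Fin d) ℚ_[p]) i j = 0}
      = (fun u => b₂ * u) ''
        {u : GL (Fin d) ℚ_[p] | ∀ i j : Fin d, lam i < lam j →
          (u : Matrix (Fin d) (Fin d) ℚ_[p]) i j = 0} := by
  have hconj : ∀ n, (LamP p lam n)⁻¹ * b₁⁻¹ * b₂ * LamP p lam n
      = (b₁ * LamP p lam n)⁻¹ * (b₂ * LamP p lam n) := fun n => by group
  have hdist : Tendsto (fun n : ℕ => (1 / (n : ℝ)) *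
      dP p 1 ((LamP p lam n)⁻¹ * b₁⁻¹ * b₂ * LamP p lam n)) atTop (𝓝 0) := by
    simpa only [hconj, dP_one_inv_mul] using tendsto_dP_div_of_tendsto h₁ h₂
  have hP : b₁⁻¹ * b₂ ∈ blockTriangularSubgroup (OrderDual.toDual ∘ lam) :=
    mem_blockTriangularSubgroup_of_tendsto lam _ (by simpa only [mul_assoc] using hdist)
  -- the coset `b • s` is by definition the image of `s` under `(b * ·)`
  exact ⟨hdist, fun i j hij => hP hij, (leftCoset_eq_iff _).mpr hP⟩

open Filter in
/-- If `b₁` and `b₂` both satisfy `(1/n)·d_p(x_n, b_i Λ_n) → 0` for the same sequence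
`x_n`, then `(1/n)·d_p(e, Λ_n⁻¹ b₁⁻¹ b₂ Λ_n) → 0`, hence `b₁⁻¹b₂ ∈ P_p` and `b₁, b₂`
define the same element of the flag manifold `B_p = GL_d(ℚ_p)/P_p`. -/
theorem same_flag_of_tendsto (p : ℕ) [Fact p.Prime] (d : ℕ)
    (lam : Fin d → ℝ) (hlam : Antitone lam)
    (b₁ b₂ : GL (Fin d) ℚ_[p]) (x : ℕ → GL (Fin d) ℚ_[p])
    (h₁ : Tendsto (fun n : ℕ => (1 / (n : ℝ)) * dP p (x n) (b₁ * LamP p lam n))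
      atTop (nhds 0))
    (h₂ : Tendsto (fun n : ℕ => (1 / (n : ℝ)) * dP p (x n) (b₂ * LamP p lam n))
      atTop (nhds 0)) :
    Tendsto (fun n : ℕ => (1 / (n : ℝ)) *
        dP p 1 ((LamP p lam n)⁻¹ * b₁⁻¹ * b₂ * LamP p lam n)) atTop (nhds 0)
    ∧ (∀ i j : Fin d, lam i < lam j →
        ((b₁⁻¹ * b₂ : GL (Fin d) ℚ_[p]) : Matrix (Fin d) (Fin d) ℚ_[p]) i j = 0)
    ∧ (fun u => b₁ * u) ''
        {u : GL (Fin d) ℚ_[p] | ∀ i j : Fin d, lam i < lam j →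
          (u : Matrix (Fin d) (Fin d) ℚ_[p]) i j = 0}
      = (fun u => b₂ * u) ''
        {u : GL (Fin d) ℚ_[p] | ∀ i j : Fin d, lam i < lam j →
          (u : Matrix (Fin d) (Fin d) ℚ_[p]) i j = 0} :=
  same_flag_of_tendsto_general p d lam b₁ b₂ x h₁ h₂
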